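/- Let f : [0,7] → [0,7] be defined piecewise (with α = log 2/log 3, f₂(x)=x^α, f₃(x)=1−(1−x)^α, c the Cantor function) by: f₃(x) on [0,1], 1+f₂(x−1) on (1,2], 2+c(x−2) on (2,3], 3+f₃(x−3) on (3,4], and k+f₂(x−k) on (k,k+1] for k=4,5,6. Then f is nondecreasing, continuous, and not absolutely continuous. -/

import Mathlib

noncomputable def modCont (f : ℝ → ℝ) (a b : ℝ) (δ : ℝ) : ℝ :=
  sSup {d : ℝ | ∃ x ∈ Set.Icc a b, ∃ y ∈ Set.Icc a b, |x - y| ≤ δ ∧ d = |f x - f y|}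

def AbsolutelyContinuousOn (g : ℝ → ℝ) (a b : ℝ) : Prop :=
  ∀ ε > (0:ℝ), ∃ δ > (0:ℝ), ∀ n : ℕ, ∀ x y : ℕ → ℝ,
    (∀ i < n, a ≤ x i ∧ x i ≤ y i ∧ y i ≤ b) →
    (∀ i < n, ∀ j < n, i ≠ j → Disjoint (Set.Ioo (x i) (y i)) (Set.Ioo (x j) (y j))) →
    (∑ i ∈ Finset.range n, (y i - x i)) < δ →
    (∑ i ∈ Finset.range n, |g (y i) - g (x i)|) < ε

/-- The standard Cantor function is the unique monotone function on `[0,1]` with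
`c 0 = 0`, `c 1 = 1`, satisfying the self-similarity relations
`c (x/3) = c x / 2` and `c ((x+2)/3) = (1 + c x)/2`. -/
def IsCantorFunction (c : ℝ → ℝ) : Prop :=
  MonotoneOn c (Set.Icc 0 1) ∧ c 0 = 0 ∧ c 1 = 1 ∧
  (∀ x ∈ Set.Icc (0:ℝ) 1, c (x / 3) = c x / 2) ∧
  (∀ x ∈ Set.Icc (0:ℝ) 1, c ((x + 2) / 3) = (1 + c x) / 2)

noncomputable def cantorAlpha : ℝ := Real.log 2 / Real.log 3

/-- The function `f` of the paper, built from the Cantor function `c`. -/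
noncomputable def paperF (c : ℝ → ℝ) (x : ℝ) : ℝ :=
  if x ≤ 1 then 1 - (1 - x) ^ cantorAlpha
  else if x ≤ 2 then 1 + (x - 1) ^ cantorAlpha
  else if x ≤ 3 then 2 + c (x - 2)
  else if x ≤ 4 then 3 + (1 - (1 - (x - 3)) ^ cantorAlpha)
  else if x ≤ 5 then 4 + (x - 4) ^ cantorAlpha
  else if x ≤ 6 then 5 + (x - 5) ^ cantorAlpha
  else 6 + (x - 6) ^ cantorAlpha

/-- The function `g` of the paper: same as `paperF` but with the identity on `(2,3]`. -/
noncomputable def paperG (x : ℝ) : ℝ :=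
  if x ≤ 1 then 1 - (1 - x) ^ cantorAlpha
  else if x ≤ 2 then 1 + (x - 1) ^ cantorAlpha
  else if x ≤ 3 then x
  else if x ≤ 4 then 3 + (1 - (1 - (x - 3)) ^ cantorAlpha)
  else if x ≤ 5 then 4 + (x - 4) ^ cantorAlpha
  else if x ≤ 6 then 5 + (x - 5) ^ cantorAlpha
  else 6 + (x - 6) ^ cantorAlpha

open Set

lemma alpha_pos : 0 < cantorAlpha :=
  div_pos (Real.log_pos one_lt_two) (Real.log_pos (by norm_num))

/-- Left endpoints of the level-`n` Cantor intervals. -/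
noncomputable def aG : ℕ → ℕ → ℝ
  | 0, _ => 0
  | n+1, i => if i < 2^n then aG n i / 3 else (aG n (i - 2^n) + 2)/3

lemma aG_bounds : ∀ n i, i < 2^n → 0 ≤ aG n i ∧ aG n i + (1/3:ℝ)^n ≤ 1 := by
  intro n
  induction n with
  | zero => intro i hi; interval_cases i; simp [aG]
  | succ n ih =>
    intro i hi
    by_cases h : i < 2^n
    · obtain ⟨h1, h2⟩ := ih i h
      simp only [aG, if_pos h]
      constructor
      · linarith
      · rw [pow_succ]; nlinarith
    · have hj : i - 2^n < 2^n := by omega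
      obtain ⟨h1, h2⟩ := ih _ hj
      simp only [aG, if_neg h]
      constructor
      · linarith
      · rw [pow_succ]; nlinarith

lemma aG_gap : ∀ n i j, i < j → j < 2^n → aG n i + (1/3:ℝ)^n ≤ aG n j := by
  intro n
  induction n with
  | zero => intro i j hij hj; omega
  | succ n ih =>
    intro i j hij hj
    by_cases hjn : j < 2^n
    · have hin : i < 2^n := by omega
      have := ih i j hij hjn
      simp only [aG, if_pos hjn, if_pos hin, pow_succ]
      linarith
    · by_cases hin : i < 2^n
      · have h2 := (aG_bounds n i hin).2
        have h4 : (0:ℝ) ≤ aG n (j - 2^n) := (aG_bounds n _ (by omega)).1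
        simp only [aG, if_pos hin, if_neg hjn]
        rw [pow_succ]
        nlinarith
      · have hj' : j - 2^n < 2^n := by omega
        have hij' : i - 2^n < j - 2^n := by omega
        have := ih _ _ hij' hj'
        simp only [aG, if_neg hin, if_neg hjn, pow_succ]
        linarith

lemma aG_value {c : ℝ → ℝ} (hc : IsCantorFunction c) :
    ∀ n i, i < 2^n → c (aG n i) = i / 2^n ∧ c (aG n i + (1/3:ℝ)^n) = (i+1) / 2^n := by
  obtain ⟨hmono, h0, h1, hL, hR⟩ := hc
  intro n
  induction n with
  | zero => intro i hi; interval_cases i; simp [aG, h0, h1]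
  | succ n ih =>
    intro i hi
    by_cases h : i < 2^n
    · obtain ⟨v1, v2⟩ := ih i h
      obtain ⟨b1, b2⟩ := aG_bounds n i h
      have hp : (0:ℝ) < (1/3:ℝ)^n := by positivity
      have mem1 : aG n i ∈ Icc (0:ℝ) 1 := ⟨b1, by linarith⟩
      have mem2 : aG n i + (1/3:ℝ)^n ∈ Icc (0:ℝ) 1 := ⟨by linarith, b2⟩
      have e1 : aG (n+1) i = aG n i / 3 := by simp [aG, if_pos h]
      have e2 : aG (n+1) i + (1/3:ℝ)^(n+1) = (aG n i + (1/3:ℝ)^n) / 3 := by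
        rw [e1, pow_succ]; ring
      constructor
      · rw [e1, hL _ mem1, v1, pow_succ]; ring
      · rw [e2, hL _ mem2, v2, pow_succ]; ring
    · set j := i - 2^n with hj
      have hjn : j < 2^n := by omega
      obtain ⟨v1, v2⟩ := ih j hjn
      obtain ⟨b1, b2⟩ := aG_bounds n j hjn
      have hp : (0:ℝ) < (1/3:ℝ)^n := by positivity
      have mem1 : aG n j ∈ Icc (0:ℝ) 1 := ⟨b1, by linarith⟩
      have mem2 : aG n j + (1/3:ℝ)^n ∈ Icc (0:ℝ) 1 := ⟨by linarith, b2⟩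
      have e1 : aG (n+1) i = (aG n j + 2) / 3 := by simp [aG, if_neg h]; rfl
      have e2 : aG (n+1) i + (1/3:ℝ)^(n+1) = ((aG n j + (1/3:ℝ)^n) + 2) / 3 := by
        rw [e1, pow_succ]; ring
      have hcast : (i:ℝ) = 2^n + (j:ℝ) := by
        have : i = 2^n + j := by omega
        rw [this]; push_cast; ring
      constructor
      · rw [e1, hR _ mem1, v1, hcast, pow_succ]
        field_simp
      · rw [e2, hR _ mem2, v2, hcast, pow_succ]
        field_simp
        ring

lemma aG_zero : ∀ n, aG n 0 = 0 := by
  intro n; induction n with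
  | zero => rfl
  | succ n ih => simp [aG, pow_pos, ih]

lemma aG_last : ∀ n, aG n (2^n - 1) = 1 - (1/3:ℝ)^n := by
  intro n; induction n with
  | zero => simp [aG]
  | succ n ih =>
    have h : ¬ (2^(n+1) - 1 < 2^n) := by
      have : 0 < 2^n := by positivity
      omega
    have hj : 2^(n+1) - 1 - 2^n = 2^n - 1 := by
      have : 0 < 2^n := by positivity
      omega
    rw [show aG (n+1) (2^(n+1)-1) = (aG n (2^(n+1)-1-2^n) + 2)/3 from by
      simp only [aG, if_neg h], hj, ih, pow_succ]
    ring

lemma c_nonneg {c : ℝ → ℝ} (hc : IsCantorFunction c) {a : ℝ} (ha : a ∈ Icc (0:ℝ) 1) :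
    0 ≤ c a := by
  have := hc.1 (show (0:ℝ) ∈ Icc (0:ℝ) 1 by norm_num) ha ha.1
  rw [hc.2.1] at this; exact this

lemma c_le_one {c : ℝ → ℝ} (hc : IsCantorFunction c) {a : ℝ} (ha : a ∈ Icc (0:ℝ) 1) :
    c a ≤ 1 := by
  have := hc.1 ha (show (1:ℝ) ∈ Icc (0:ℝ) 1 by norm_num) ha.2
  rw [hc.2.2.1] at this; exact this

lemma c_pos {c : ℝ → ℝ} (hc : IsCantorFunction c) {a : ℝ} (ha : 0 < a) (ha1 : a ≤ 1) :
    0 < c a := by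
  obtain ⟨n, hn⟩ : ∃ n : ℕ, (1/3:ℝ)^n < a := exists_pow_lt_of_lt_one ha (by norm_num)
  have hv := (aG_value hc n 0 (by positivity)).2
  rw [aG_zero, zero_add] at hv
  have hp : (0:ℝ) < (1/3:ℝ)^n := by positivity
  have hmem : (1/3:ℝ)^n ∈ Icc (0:ℝ) 1 := ⟨hp.le, by linarith⟩
  have := hc.1 hmem ⟨by linarith, ha1⟩ hn.le
  rw [hv] at this
  have h2 : (0:ℝ) < (1:ℝ)/2^n := by positivity
  push_cast at this
  linarith

lemma c_lt_one {c : ℝ → ℝ} (hc : IsCantorFunction c) {a : ℝ} (h0 : 0 ≤ a) (ha : a < 1) :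
    c a < 1 := by
  obtain ⟨n, hn⟩ : ∃ n : ℕ, (1/3:ℝ)^n < 1 - a := exists_pow_lt_of_lt_one (by linarith) (by norm_num)
  have hpow : 0 < 2^n := by positivity
  have hv := (aG_value hc n (2^n - 1) (by omega)).1
  rw [aG_last] at hv
  have hp : (0:ℝ) < (1/3:ℝ)^n := by positivity
  have hmem : 1 - (1/3:ℝ)^n ∈ Icc (0:ℝ) 1 := ⟨by linarith, by linarith⟩
  have hle := hc.1 ⟨h0, ha.le⟩ hmem (by linarith)
  rw [hv] at hle
  have hcast : ((2^n - 1 : ℕ) : ℝ) = 2^n - 1 := by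
    push_cast [Nat.cast_sub (by omega : 1 ≤ 2^n)]; norm_num
  rw [hcast] at hle
  have h2 : (0:ℝ) < (2:ℝ)^n := by positivity
  have : (2^n - 1 : ℝ) / 2^n < 1 := by rw [div_lt_one h2]; linarith
  linarith

lemma c_dense {c : ℝ → ℝ} (hc : IsCantorFunction c) :
    Icc (0:ℝ) 1 ⊆ closure (c '' Icc 0 1) := by
  intro y hy
  rw [Metric.mem_closure_iff]
  intro ε hε
  obtain ⟨n, hn⟩ : ∃ n : ℕ, (1/2:ℝ)^n < ε := exists_pow_lt_of_lt_one hε (by norm_num)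
  have h2 : (0:ℝ) < (2:ℝ)^n := by positivity
  set i := ⌊y * 2^n⌋₊ with hidef
  by_cases hi : i < 2^n
  · obtain ⟨b1, b2⟩ := aG_bounds n i hi
    have hp : (0:ℝ) < (1/3:ℝ)^n := by positivity
    refine ⟨c (aG n i), ⟨aG n i, ⟨b1, by linarith⟩, rfl⟩, ?_⟩
    rw [(aG_value hc n i hi).1, Real.dist_eq]
    have hfl : (i:ℝ) ≤ y * 2^n := Nat.floor_le (mul_nonneg hy.1 (by positivity))
    have hfl2 : y * 2^n < i + 1 := Nat.lt_floor_add_one _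
    have hnn : 0 ≤ y - (i:ℝ)/2^n := by
      rw [sub_nonneg, div_le_iff₀ h2]; exact hfl
    have hub : y - (i:ℝ)/2^n < (1/2:ℝ)^n := by
      have e : (1/2:ℝ)^n = 1/2^n := by rw [div_pow, one_pow]
      rw [e, sub_lt_iff_lt_add, ← add_div, lt_div_iff₀ h2]
      linarith
    rw [abs_of_nonneg hnn]
    linarith
  · have h' : ((2^n : ℕ) : ℝ) ≤ y * 2^n :=
      (Nat.le_floor_iff (mul_nonneg hy.1 (by positivity))).mp (by omega)
    have : (2^n : ℝ) ≤ y * 2^n := by push_cast at h'; exact h'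
    have hy1 : y = 1 := le_antisymm hy.2 (by nlinarith)
    refine ⟨c 1, ⟨1, ⟨by norm_num, le_refl 1⟩, rfl⟩, ?_⟩
    rw [hc.2.2.1, hy1]
    simpa using hε

lemma c_continuousOn {c : ℝ → ℝ} (hc : IsCantorFunction c) : ContinuousOn c (Icc 0 1) := by
  have hmono := hc.1
  have hdense := c_dense hc
  intro a ha
  rcases eq_or_lt_of_le ha.1 with h0 | h0
  · have hicc : Icc (0:ℝ) 1 ∈ nhdsWithin a (Ici a) := by
      rw [← h0]; exact Icc_mem_nhdsGE_of_mem ⟨le_refl 0, by norm_num⟩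
    have hfs : closure (c '' Icc 0 1) ∈ nhdsWithin (c a) (Ici (c a)) := by
      refine Filter.mem_of_superset ?_ hdense
      rw [← h0, hc.2.1]
      exact Icc_mem_nhdsGE_of_mem ⟨le_refl 0, by norm_num⟩
    exact (continuousWithinAt_right_of_monotoneOn_of_closure_image_mem_nhdsWithin
      hmono hicc hfs).mono (by rw [← h0]; exact Icc_subset_Ici_self)
  rcases eq_or_lt_of_le ha.2 with h1 | h1
  · have hicc : Icc (0:ℝ) 1 ∈ nhdsWithin a (Iic a) := by
      rw [h1]; exact Icc_mem_nhdsLE_of_mem ⟨by norm_num, le_refl 1⟩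
    have hfs : closure (c '' Icc 0 1) ∈ nhdsWithin (c a) (Iic (c a)) := by
      refine Filter.mem_of_superset ?_ hdense
      rw [h1, hc.2.2.1]
      exact Icc_mem_nhdsLE_of_mem ⟨by norm_num, le_refl 1⟩
    exact (continuousWithinAt_left_of_monotoneOn_of_closure_image_mem_nhdsWithin
      hmono hicc hfs).mono (by rw [h1]; exact Icc_subset_Iic_self)
  · refine ContinuousAt.continuousWithinAt ?_
    refine continuousAt_of_monotoneOn_of_closure_image_mem_nhds hmono
      (Icc_mem_nhds h0 h1) ?_
    exact Filter.mem_of_superset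
      (Icc_mem_nhds (c_pos hc h0 ha.2) (c_lt_one hc ha.1 h1)) hdense

lemma monoGlue {f : ℝ → ℝ} {a b d : ℝ} (hab : a ≤ b) (hbd : b ≤ d)
    (h1 : MonotoneOn f (Icc a b)) (h2 : MonotoneOn f (Icc b d)) :
    MonotoneOn f (Icc a d) := by
  intro x hx y hy hxy
  by_cases hyb : y ≤ b
  · exact h1 ⟨hx.1, hxy.trans hyb⟩ ⟨hy.1, hyb⟩ hxy
  · push_neg at hyb
    by_cases hxb : b ≤ x
    · exact h2 ⟨hxb, hx.2⟩ ⟨hyb.le, hy.2⟩ hxy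
    · push_neg at hxb
      exact (h1 ⟨hx.1, hxb.le⟩ ⟨hab, le_refl b⟩ hxb.le).trans
        (h2 ⟨le_refl b, hbd⟩ ⟨hyb.le, hy.2⟩ hyb.le)

lemma contGlue {f : ℝ → ℝ} {a b d : ℝ} (hab : a ≤ b) (hbd : b ≤ d)
    (h1 : ContinuousOn f (Icc a b)) (h2 : ContinuousOn f (Icc b d)) :
    ContinuousOn f (Icc a d) := by
  rw [← Icc_union_Icc_eq_Icc hab hbd]
  intro x hx
  refine ContinuousWithinAt.union ?_ ?_
  · by_cases h : x ∈ Icc a b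
    · exact h1 x h
    · exact continuousWithinAt_of_notMem_closure (by rwa [isClosed_Icc.closure_eq])
  · by_cases h : x ∈ Icc b d
    · exact h2 x h
    · exact continuousWithinAt_of_notMem_closure (by rwa [isClosed_Icc.closure_eq])

lemma monoOfEq {f g : ℝ → ℝ} {s : Set ℝ} (h : EqOn f g s) (hg : MonotoneOn g s) :
    MonotoneOn f s :=
  fun x hx y hy hxy => by rw [h hx, h hy]; exact hg hx hy hxy

lemma rpow_cont : Continuous (fun t : ℝ => t ^ cantorAlpha) :=
  continuous_iff_continuousAt.2 fun x => Real.continuousAt_rpow_const x _ (Or.inr alpha_pos.le)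

section Pieces

variable {c : ℝ → ℝ} (hc : IsCantorFunction c)

lemma pf0 : EqOn (paperF c) (fun x => 1 - (1-x) ^ cantorAlpha) (Icc 0 1) := by
  intro x hx; simp [paperF, hx.2]

lemma pf1 : EqOn (paperF c) (fun x => 1 + (x-1) ^ cantorAlpha) (Icc 1 2) := by
  intro x hx
  by_cases h : x ≤ 1
  · have hx1 : x = 1 := le_antisymm h hx.1
    subst hx1
    simp [paperF, Real.zero_rpow alpha_pos.ne']
  · simp [paperF, h, hx.2]

include hc in
lemma pf2 : EqOn (paperF c) (fun x => 2 + c (x - 2)) (Icc 2 3) := by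
  intro x hx
  by_cases h : x ≤ 2
  · have hx2 : x = 2 := le_antisymm h hx.1
    subst hx2
    simp [paperF, Real.one_rpow, hc.2.1]
    norm_num
  · have h1 : ¬ x ≤ 1 := by intro h'; exact h (h'.trans (by norm_num))
    simp [paperF, h1, h, hx.2]

include hc in
lemma pf3 : EqOn (paperF c) (fun x => 3 + (1 - (1 - (x - 3)) ^ cantorAlpha)) (Icc 3 4) := by
  intro x hx
  by_cases h : x ≤ 3
  · have hx3 : x = 3 := le_antisymm h hx.1
    subst hx3
    have h1 : ¬ (3:ℝ) ≤ 1 := by norm_num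
    have h2 : ¬ (3:ℝ) ≤ 2 := by norm_num
    norm_num [paperF, h1, h2, Real.one_rpow, hc.2.2.1]
  · have h1 : ¬ x ≤ 1 := by intro h'; exact h (h'.trans (by norm_num))
    have h2 : ¬ x ≤ 2 := by intro h'; exact h (h'.trans (by norm_num))
    simp [paperF, h1, h2, h, hx.2]

lemma pf4 : EqOn (paperF c) (fun x => 4 + (x - 4) ^ cantorAlpha) (Icc 4 5) := by
  intro x hx
  by_cases h : x ≤ 4
  · have hx4 : x = 4 := le_antisymm h hx.1
    subst hx4
    have h1 : ¬ (4:ℝ) ≤ 1 := by norm_num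
    have h2 : ¬ (4:ℝ) ≤ 2 := by norm_num
    have h3 : ¬ (4:ℝ) ≤ 3 := by norm_num
    simp [paperF, h1, h2, h3, Real.zero_rpow alpha_pos.ne', Real.one_rpow]
    norm_num [Real.zero_rpow alpha_pos.ne']
  · have h1 : ¬ x ≤ 1 := by intro h'; exact h (h'.trans (by norm_num))
    have h2 : ¬ x ≤ 2 := by intro h'; exact h (h'.trans (by norm_num))
    have h3 : ¬ x ≤ 3 := by intro h'; exact h (h'.trans (by norm_num))
    simp [paperF, h1, h2, h3, h, hx.2]

lemma pf5 : EqOn (paperF c) (fun x => 5 + (x - 5) ^ cantorAlpha) (Icc 5 6) := by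
  intro x hx
  by_cases h : x ≤ 5
  · have hx5 : x = 5 := le_antisymm h hx.1
    subst hx5
    have h1 : ¬ (5:ℝ) ≤ 1 := by norm_num
    have h2 : ¬ (5:ℝ) ≤ 2 := by norm_num
    have h3 : ¬ (5:ℝ) ≤ 3 := by norm_num
    have h4 : ¬ (5:ℝ) ≤ 4 := by norm_num
    simp [paperF, h1, h2, h3, h4, Real.zero_rpow alpha_pos.ne', Real.one_rpow]
    norm_num
  · have h1 : ¬ x ≤ 1 := by intro h'; exact h (h'.trans (by norm_num))
    have h2 : ¬ x ≤ 2 := by intro h'; exact h (h'.trans (by norm_num))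
    have h3 : ¬ x ≤ 3 := by intro h'; exact h (h'.trans (by norm_num))
    have h4 : ¬ x ≤ 4 := by intro h'; exact h (h'.trans (by norm_num))
    simp [paperF, h1, h2, h3, h4, h, hx.2]

lemma pf6 : EqOn (paperF c) (fun x => 6 + (x - 6) ^ cantorAlpha) (Icc 6 7) := by
  intro x hx
  by_cases h : x ≤ 6
  · have hx6 : x = 6 := le_antisymm h hx.1
    subst hx6
    have h1 : ¬ (6:ℝ) ≤ 1 := by norm_num
    have h2 : ¬ (6:ℝ) ≤ 2 := by norm_num
    have h3 : ¬ (6:ℝ) ≤ 3 := by norm_num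
    have h4 : ¬ (6:ℝ) ≤ 4 := by norm_num
    have h5 : ¬ (6:ℝ) ≤ 5 := by norm_num
    simp [paperF, h1, h2, h3, h4, h5, Real.zero_rpow alpha_pos.ne', Real.one_rpow]
    norm_num
  · have h1 : ¬ x ≤ 1 := by intro h'; exact h (h'.trans (by norm_num))
    have h2 : ¬ x ≤ 2 := by intro h'; exact h (h'.trans (by norm_num))
    have h3 : ¬ x ≤ 3 := by intro h'; exact h (h'.trans (by norm_num))
    have h4 : ¬ x ≤ 4 := by intro h'; exact h (h'.trans (by norm_num))
    have h5 : ¬ x ≤ 5 := by intro h'; exact h (h'.trans (by norm_num))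
    simp [paperF, h1, h2, h3, h4, h5, h]

end Pieces

lemma monoDown {a : ℝ} : MonotoneOn (fun x => a + (1 - (1 + a - x) ^ cantorAlpha)) (Icc a (a+1)) := by
  intro x hx y hy hxy
  have h1 : (0:ℝ) ≤ 1 + a - y := by have := hy.2; linarith
  have h2 : 1 + a - y ≤ 1 + a - x := by linarith
  have := Real.rpow_le_rpow h1 h2 alpha_pos.le
  simp only
  linarith

lemma monoUp {a : ℝ} {b : ℝ} : MonotoneOn (fun x => b + (x - a) ^ cantorAlpha) (Ici a) := by
  intro x hx y _ hxy
  have h1 : (0:ℝ) ≤ x - a := sub_nonneg.2 hx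
  have := Real.rpow_le_rpow h1 (by linarith : x - a ≤ y - a) alpha_pos.le
  simp only
  linarith

theorem stmt12 (c : ℝ → ℝ) (hc : IsCantorFunction c) :
    MonotoneOn (paperF c) (Set.Icc 0 7) ∧
    ContinuousOn (paperF c) (Set.Icc 0 7) ∧
    ¬ AbsolutelyContinuousOn (paperF c) 0 7 := by
  have hmono := hc.1
  -- piecewise monotonicity
  have m0 : MonotoneOn (paperF c) (Icc 0 1) := by
    refine monoOfEq pf0 ?_
    have : (fun x : ℝ => 1 - (1-x) ^ cantorAlpha)
        = fun x => 0 + (1 - (1 + 0 - x) ^ cantorAlpha) := by funext x; ring_nf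
    rw [this]
    exact (monoDown (a := 0)).mono (Set.Icc_subset_Icc le_rfl (by norm_num))
  have m1 : MonotoneOn (paperF c) (Icc 1 2) := by
    refine monoOfEq pf1 ?_
    exact (monoUp (a := 1) (b := 1)).mono (fun x hx => hx.1)
  have m2 : MonotoneOn (paperF c) (Icc 2 3) := by
    refine monoOfEq (pf2 hc) ?_
    intro x hx y hy hxy
    have hx' : x - 2 ∈ Icc (0:ℝ) 1 := ⟨by linarith [hx.1], by linarith [hx.2]⟩
    have hy' : y - 2 ∈ Icc (0:ℝ) 1 := ⟨by linarith [hy.1], by linarith [hy.2]⟩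
    have := hmono hx' hy' (by linarith)
    simp only
    linarith
  have m3 : MonotoneOn (paperF c) (Icc 3 4) := by
    refine monoOfEq (pf3 hc) ?_
    have : (fun x : ℝ => 3 + (1 - (1 - (x - 3)) ^ cantorAlpha))
        = fun x => 3 + (1 - (1 + 3 - x) ^ cantorAlpha) := by funext x; ring_nf
    rw [this]
    exact (monoDown (a := 3)).mono (Set.Icc_subset_Icc le_rfl (by norm_num))
  have m4 : MonotoneOn (paperF c) (Icc 4 5) := by
    refine monoOfEq pf4 ?_
    exact (monoUp (a := 4) (b := 4)).mono (fun x hx => hx.1)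
  have m5 : MonotoneOn (paperF c) (Icc 5 6) := by
    refine monoOfEq pf5 ?_
    exact (monoUp (a := 5) (b := 5)).mono (fun x hx => hx.1)
  have m6 : MonotoneOn (paperF c) (Icc 6 7) := by
    refine monoOfEq pf6 ?_
    exact (monoUp (a := 6) (b := 6)).mono (fun x hx => hx.1)
  have hM : MonotoneOn (paperF c) (Icc 0 7) := by
    refine monoGlue (by norm_num) (by norm_num) m0 ?_
    refine monoGlue (by norm_num) (by norm_num) m1 ?_
    refine monoGlue (by norm_num) (by norm_num) m2 ?_
    refine monoGlue (by norm_num) (by norm_num) m3 ?_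
    refine monoGlue (by norm_num) (by norm_num) m4 ?_
    exact monoGlue (by norm_num) (by norm_num) m5 m6
  -- continuity
  have contUp : ∀ a b : ℝ, Continuous (fun x : ℝ => b + (x - a) ^ cantorAlpha) := by
    intro a b
    exact continuous_const.add (rpow_cont.comp (continuous_id.sub continuous_const))
  have contDown : ∀ a b : ℝ, Continuous (fun x : ℝ => b + (1 - (1 + a - x) ^ cantorAlpha)) := by
    intro a b
    exact continuous_const.add (continuous_const.sub
      (rpow_cont.comp (continuous_const.sub continuous_id)))
  have k0 : ContinuousOn (paperF c) (Icc 0 1) := by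
    refine ContinuousOn.congr ((contDown 0 0).continuousOn) ?_
    intro x hx
    rw [pf0 hx]
    norm_num
  have k1 : ContinuousOn (paperF c) (Icc 1 2) :=
    ContinuousOn.congr ((contUp 1 1).continuousOn) pf1
  have k2 : ContinuousOn (paperF c) (Icc 2 3) := by
    refine ContinuousOn.congr ?_ (pf2 hc)
    refine continuousOn_const.add ?_
    refine ContinuousOn.comp (c_continuousOn hc)
      ((continuous_id.sub continuous_const).continuousOn) ?_
    intro x hx
    exact ⟨by simpa using (by linarith [hx.1] : (0:ℝ) ≤ x - 2),
      by simpa using (by linarith [hx.2] : x - 2 ≤ 1)⟩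
  have k3 : ContinuousOn (paperF c) (Icc 3 4) := by
    refine ContinuousOn.congr ((contDown 3 3).continuousOn) ?_
    intro x hx
    rw [pf3 hc hx]
    show 3 + (1 - (1 - (x - 3)) ^ cantorAlpha) = 3 + (1 - (1 + 3 - x) ^ cantorAlpha)
    rw [show (1:ℝ) - (x - 3) = 1 + 3 - x from by ring]
  have k4 : ContinuousOn (paperF c) (Icc 4 5) :=
    ContinuousOn.congr ((contUp 4 4).continuousOn) pf4
  have k5 : ContinuousOn (paperF c) (Icc 5 6) :=
    ContinuousOn.congr ((contUp 5 5).continuousOn) pf5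
  have k6 : ContinuousOn (paperF c) (Icc 6 7) :=
    ContinuousOn.congr ((contUp 6 6).continuousOn) pf6
  have hC : ContinuousOn (paperF c) (Icc 0 7) := by
    refine contGlue (by norm_num) (by norm_num) k0 ?_
    refine contGlue (by norm_num) (by norm_num) k1 ?_
    refine contGlue (by norm_num) (by norm_num) k2 ?_
    refine contGlue (by norm_num) (by norm_num) k3 ?_
    refine contGlue (by norm_num) (by norm_num) k4 ?_
    exact contGlue (by norm_num) (by norm_num) k5 k6
  refine ⟨hM, hC, ?_⟩
  -- not absolutely continuous
  intro hAC
  obtain ⟨δ, hδ, H⟩ := hAC 1 one_pos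
  obtain ⟨n, hn⟩ : ∃ n : ℕ, (2/3:ℝ)^n < δ := exists_pow_lt_of_lt_one hδ (by norm_num)
  set N := 2^n with hN
  set X : ℕ → ℝ := fun i => 2 + aG n i with hX
  set Y : ℕ → ℝ := fun i => 2 + aG n i + (1/3:ℝ)^n with hY
  have hp : (0:ℝ) < (1/3:ℝ)^n := by positivity
  have key := H N X Y ?_ ?_ ?_
  · -- derive contradiction: sum = 1
    have hsum : (∑ i ∈ Finset.range N, |paperF c (Y i) - paperF c (X i)|) = 1 := by
      have step : ∀ i ∈ Finset.range N, |paperF c (Y i) - paperF c (X i)| = (1/2:ℝ)^n := by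
        intro i hi
        rw [Finset.mem_range] at hi
        obtain ⟨b1, b2⟩ := aG_bounds n i hi
        obtain ⟨v1, v2⟩ := aG_value hc n i hi
        have hXm : X i ∈ Icc (2:ℝ) 3 :=
          ⟨show (2:ℝ) ≤ 2 + aG n i by linarith, show (2:ℝ) + aG n i ≤ 3 by linarith⟩
        have hYm : Y i ∈ Icc (2:ℝ) 3 :=
          ⟨show (2:ℝ) ≤ 2 + aG n i + (1/3:ℝ)^n by linarith,
           show (2:ℝ) + aG n i + (1/3:ℝ)^n ≤ 3 by linarith⟩
        rw [pf2 hc hXm, pf2 hc hYm]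
        have e1 : X i - 2 = aG n i := show (2:ℝ) + aG n i - 2 = aG n i by ring
        have e2 : Y i - 2 = aG n i + (1/3:ℝ)^n :=
          show (2:ℝ) + aG n i + (1/3:ℝ)^n - 2 = aG n i + (1/3:ℝ)^n by ring
        simp only
        rw [e1, e2, v1, v2]
        have h2 : (0:ℝ) < (2:ℝ)^n := by positivity
        have : (2 + ((i:ℝ)+1)/2^n) - (2 + (i:ℝ)/2^n) = (1/2:ℝ)^n := by
          rw [div_pow, one_pow]
          field_simp
          ring
        rw [this, abs_of_nonneg (by positivity)]
      rw [Finset.sum_congr rfl step, Finset.sum_const, Finset.card_range, nsmul_eq_mul]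
      rw [hN]
      push_cast
      rw [div_pow, one_pow]
      field_simp
    rw [hsum] at key
    exact absurd key (lt_irrefl 1)
  · intro i hi
    obtain ⟨b1, b2⟩ := aG_bounds n i hi
    refine ⟨show (0:ℝ) ≤ 2 + aG n i by linarith,
      show (2:ℝ) + aG n i ≤ 2 + aG n i + (1/3:ℝ)^n by linarith,
      show (2:ℝ) + aG n i + (1/3:ℝ)^n ≤ 7 by linarith⟩
  · intro i hi j hj hij
    have key2 : ∀ i j, i < j → j < N → Disjoint (Ioo (X i) (Y i)) (Ioo (X j) (Y j)) := by
      intro i j hij hj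
      have hg := aG_gap n i j hij hj
      refine Set.disjoint_left.2 fun t ht ht' => ?_
      have h1 : t < Y i := ht.2
      have h2 : X j < t := ht'.1
      have : Y i ≤ X j := show (2:ℝ) + aG n i + (1/3:ℝ)^n ≤ 2 + aG n j by linarith
      linarith
    rcases lt_or_gt_of_ne hij with h | h
    · exact key2 i j h hj
    · exact (key2 j i h hi).symm
  · have : (∑ i ∈ Finset.range N, (Y i - X i)) = (2/3:ℝ)^n := by
      have e : ∀ i ∈ Finset.range N, Y i - X i = (1/3:ℝ)^n := by
        intro i _; simp [hX, hY]
      rw [Finset.sum_congr rfl e, Finset.sum_const, Finset.card_range, nsmul_eq_mul, hN]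
      push_cast
      rw [div_pow, div_pow, one_pow]
      ring
    rw [this]
    exact hn
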